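/- arXiv:1905.02928 — 3 statements merged into one kernel-verified Lean document; each statement's English description precedes it below -/
import Mathlib

section
/- For any n ≥ 1 and K ≥ 1 dividing n, min{ 2(1-1/K)/(n/K+1), (1-K/n)/(K+1) } ≤ √(2/n). -/
/-- for `n ≥ 1` and `K ≥ 1` dividing `n`,
`min{ 2(1-1/K)/(n/K+1), (1-K/n)/(K+1) } ≤ √(2/n)`. -/
theorem cvplus_excess_bound (n K : ℕ) (hn : 1 ≤ n) (hK : 1 ≤ K) (hdvd : K ∣ n) :
    min (2 * (1 - 1 / (K : ℝ)) / ((n : ℝ) / K + 1))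
        ((1 - (K : ℝ) / n) / ((K : ℝ) + 1)) ≤ Real.sqrt (2 / n) := by
  have hn0 : (0:ℝ) < n := by exact_mod_cast hn
  have hK0 : (0:ℝ) < K := by exact_mod_cast hK
  rcases le_or_gt (2 * (K:ℝ)^2) (n:ℝ) with h | h
  · -- use first term
    refine le_trans (min_le_left _ _) ?_
    have h1 : 2 * (1 - 1 / (K : ℝ)) / ((n : ℝ) / K + 1) ≤ 2 * K / n := by
      have e : (2:ℝ) * K / n = 2 / ((n:ℝ)/K) := by
        field_simp
      rw [e]
      apply div_le_div₀ (by norm_num)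
      · nlinarith [one_div_pos.mpr hK0]
      · positivity
      · linarith
    refine le_trans h1 ?_
    rw [Real.le_sqrt (by positivity)]
    rw [div_pow, div_le_div_iff₀ (by positivity) hn0]
    nlinarith
    positivity
  · -- use second term
    refine le_trans (min_le_right _ _) ?_
    have h2 : (1 - (K:ℝ)/n) / ((K:ℝ) + 1) ≤ 1 / K := by
      apply div_le_div₀ (by norm_num)
      · nlinarith [div_pos hK0 hn0]
      · exact hK0
      · linarith
    refine le_trans h2 ?_
    rw [Real.le_sqrt (by positivity)]
    rw [div_pow, div_le_div_iff₀ (by positivity) hn0]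
    nlinarith
    positivity
end

section
/- Fix real numbers μ_1,...,μ_n (leave-one-out predictions at the test point), nonnegative reals R_1,...,R_n (leave-one-out residuals), a real y (the true test response), and α ∈ (0,1). Define q⁺ = the ⌈(1-α)(n+1)⌉-th smallest of {μ_i + R_i} (or +∞ if ⌈(1-α)(n+1)⌉ > n) and q⁻ = the ⌊α(n+1)⌋-th smallest of {μ_i - R_i} (or -∞ if ⌊α(n+1)⌋ < 1). If y ∉ [q⁻, q⁺], then the number of indices i ∈ {1,...,n} with |y - μ_i| > R_i is at least (1-α)(n+1). -/
/-- The `k`-th smallest of `v 0, ..., v (n-1)` (1-indexed). -/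
noncomputable def kth {n : ℕ} (v : Fin n → ℝ) (k : ℕ) : ℝ :=
  (((List.ofFn v) : Multiset ℝ).sort (· ≤ ·)).getD (k - 1) 0

/-- The upper quantile `q⁺_{n,α}{v_i}`: the `⌈(1-α)(n+1)⌉`-th smallest of
`v_1,…,v_n`, or `+∞` if `⌈(1-α)(n+1)⌉ > n`. -/
noncomputable def qplusE {n : ℕ} (α : ℝ) (v : Fin n → ℝ) : EReal :=
  if ⌈(1 - α) * (n + 1)⌉₊ ≤ n then ((kth v ⌈(1 - α) * (n + 1)⌉₊ : ℝ) : EReal) else ⊤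

/-- The lower quantile `q⁻_{n,α}{v_i}`: the `⌊α(n+1)⌋`-th smallest of
`v_1,…,v_n`, or `-∞` if `⌊α(n+1)⌋ < 1`. -/
noncomputable def qminusE {n : ℕ} (α : ℝ) (v : Fin n → ℝ) : EReal :=
  if 1 ≤ ⌊α * (n + 1)⌋₊ then ((kth v ⌊α * (n + 1)⌋₊ : ℝ) : EReal) else ⊥

/-!
If `y` lies above the `k`-th smallest of the values `μ i + R i`, then `y` exceeds at least `k` of
them, and `k = ⌈(1-α)(n+1)⌉`; if `y` lies below the `m`-th smallest of the values `μ i - R i`,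
then it is below at least `n + 1 - m` of them, and `n + 1 - ⌊α(n+1)⌋ ≥ (1-α)(n+1)`. In either
case each such index has `R i < |y - μ i|`.
-/

namespace List.SortedLE

variable {α : Type*} [Preorder α] [DecidableLT α] {L : List α} {i : ℕ} {y : α}

theorem succ_le_countP_lt (hL : L.SortedLE) (hi : i < L.length) (h : L[i] < y) :
    i + 1 ≤ L.countP (· < y) := by
  have hprefix : ∀ a ∈ L.take (i + 1), a < y := by
    intro a ha
    obtain ⟨j, hj, rfl⟩ := mem_take_iff_getElem.mp ha
    exact (hL.getElem_le_getElem_of_le (by omega)).trans_lt h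
  calc i + 1 = (L.take (i + 1)).length := by simp only [length_take]; omega
    _ = (L.take (i + 1)).countP (· < y) := (countP_eq_length.mpr (by simpa using hprefix)).symm
    _ ≤ L.countP (· < y) := (L.take_sublist _).countP_le

theorem length_sub_le_countP_gt (hL : L.SortedLE) (hi : i < L.length) (h : y < L[i]) :
    L.length - i ≤ L.countP (y < ·) := by
  have hsuffix : ∀ a ∈ L.drop i, y < a := by
    intro a ha
    obtain ⟨j, hj, rfl⟩ := mem_drop_iff_getElem.mp ha
    exact h.trans_le (hL.getElem_le_getElem_of_le (by omega))
  calc L.length - i = (L.drop i).length := (length_drop ..).symm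
    _ = (L.drop i).countP (y < ·) := (countP_eq_length.mpr (by simpa using hsuffix)).symm
    _ ≤ L.countP (y < ·) := (L.drop_sublist _).countP_le

end List.SortedLE

open Finset

section Quantile

variable {n : ℕ} (v : Fin n → ℝ) {k : ℕ} {y : ℝ}

theorem card_filter_univ_eq_countP_sort (p : ℝ → Prop) [DecidablePred p] :
    #{i | p (v i)} = ((List.ofFn v : Multiset ℝ).sort (· ≤ ·)).countP (p ·) := by
  rw [← Multiset.coe_countP, Multiset.sort_eq, ← Fin.univ_val_map, Multiset.countP_map]
  rfl

theorem sortedLE_sort_ofFn : ((List.ofFn v : Multiset ℝ).sort (· ≤ ·)).SortedLE :=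
  (Multiset.pairwise_sort _ _).sortedLE

theorem length_sort_ofFn : ((List.ofFn v : Multiset ℝ).sort (· ≤ ·)).length = n := by
  simp

theorem le_card_lt_of_kth_lt (hk : 1 ≤ k) (hkn : k ≤ n) (h : kth v k < y) :
    k ≤ #{i | v i < y} := by
  have hlen := length_sort_ofFn v
  rw [kth, List.getD_eq_getElem _ _ (by omega)] at h
  have hcount := (sortedLE_sort_ofFn v).succ_le_countP_lt (by omega) h
  rw [card_filter_univ_eq_countP_sort v (· < y)]
  omega

theorem le_card_gt_add_of_lt_kth (hk : 1 ≤ k) (h : y < kth v k) :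
    n + 1 ≤ #{i | y < v i} + k := by
  rcases le_or_gt k n with hkn | hnk
  · have hlen := length_sort_ofFn v
    rw [kth, List.getD_eq_getElem _ _ (by omega)] at h
    have hcount := (sortedLE_sort_ofFn v).length_sub_le_countP_gt (by omega) h
    rw [card_filter_univ_eq_countP_sort v (y < ·)]
    omega
  · omega

theorem le_card_lt_of_qplusE_lt (α : ℝ) (h : qplusE α v < y) :
    (1 - α) * (n + 1) ≤ #{i | v i < y} := by
  rw [qplusE] at h
  split_ifs at h with hkn
  · refine (Nat.le_ceil _).trans (Nat.cast_le.mpr ?_)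
    rcases Nat.eq_zero_or_pos ⌈(1 - α) * (n + 1)⌉₊ with hk0 | hk1
    · simp [hk0]
    · exact le_card_lt_of_kth_lt v hk1 hkn (EReal.coe_lt_coe_iff.mp h)
  · exact absurd h not_top_lt

theorem le_card_gt_of_lt_qminusE (α : ℝ) (h : y < qminusE α v) :
    (1 - α) * (n + 1) ≤ #{i | y < v i} := by
  rw [qminusE] at h
  split_ifs at h with hm
  · have hfloor : (⌊α * (n + 1)⌋₊ : ℝ) ≤ α * (n + 1) :=
      Nat.floor_le (zero_le_one.trans ((Nat.one_le_floor_iff _).mp hm))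
    have hcount : ((n + 1 : ℕ) : ℝ) ≤ ((#{i | y < v i} + ⌊α * (n + 1)⌋₊ : ℕ) : ℝ) :=
      Nat.cast_le.mpr (le_card_gt_add_of_lt_kth v hm (EReal.coe_lt_coe_iff.mp h))
    push_cast at hcount
    linarith
  · exact absurd h not_lt_bot

end Quantile

theorem jackknife_plus_noncoverage_implies_strange_general (n : ℕ) (α : ℝ)
    (μ : Fin n → ℝ) (R : Fin n → ℝ) (y : ℝ)
    (hnc : ¬ (qminusE α (fun i => μ i - R i) ≤ (y : EReal) ∧
              (y : EReal) ≤ qplusE α (fun i => μ i + R i))) :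
    (1 - α) * (n + 1) ≤
      ((Finset.univ.filter fun i => R i < |y - μ i|).card : ℝ) := by
  rcases not_and_or.mp hnc with hbelow | habove
  · refine (le_card_gt_of_lt_qminusE _ α (not_le.mp hbelow)).trans (Nat.cast_le.mpr ?_)
    refine card_le_card (monotone_filter_right _ fun i _ hi => ?_)
    exact (lt_sub_comm.mp hi).trans_le (neg_sub y (μ i) ▸ neg_le_abs _)
  · refine (le_card_lt_of_qplusE_lt _ α (not_le.mp habove)).trans (Nat.cast_le.mpr ?_)
    refine card_le_card (monotone_filter_right _ fun i _ hi => ?_)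
    exact (lt_sub_iff_add_lt'.mpr hi).trans_le (le_abs_self _)

/-- noncoverage of the jackknife+ interval implies the test
point wins at least `(1-α)(n+1)` residual comparisons. -/
theorem jackknife_plus_noncoverage_implies_strange (n : ℕ) (α : ℝ)
    (hα0 : 0 < α) (hα1 : α < 1)
    (μ : Fin n → ℝ) (R : Fin n → ℝ) (hR : ∀ i, 0 ≤ R i) (y : ℝ)
    (hnc : ¬ (qminusE α (fun i => μ i - R i) ≤ (y : EReal) ∧
              (y : EReal) ≤ qplusE α (fun i => μ i + R i))) :
    (1 - α) * (n + 1) ≤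
      ((Finset.univ.filter fun i => R i < |y - μ i|).card : ℝ) :=
  jackknife_plus_noncoverage_implies_strange_general n α μ R y hnc
end

section
/- If α ≤ 1/2 and n ≥ 1, then the median of the values μ_1,...,μ_n lies inside the jackknife+ interval [q⁻_{n,α}{μ_i - R_i}, q⁺_{n,α}{μ_i + R_i}] for any nonnegative R_1,...,R_n, where q⁺_{n,α}{v_i} is the ⌈(1-α)(n+1)⌉-th smallest of v_1,...,v_n and q⁻_{n,α}{v_i} is the ⌊α(n+1)⌋-th smallest (with the conventions q⁺ = +∞ if ⌈(1-α)(n+1)⌉ > n and q⁻ = -∞ if ⌊α(n+1)⌋ < 1). -/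
open Finset

theorem List.Pairwise.lt_countP_iff_of_isLowerSet {α : Type*} [Preorder α] {l : List α}
    (hl : l.Pairwise (· ≤ ·)) {p : α → Prop} [DecidablePred p] (hp : IsLowerSet {x | p x})
    {j : ℕ} (hj : j < l.length) : j < l.countP (p ·) ↔ p l[j] := by
  induction l generalizing j with
  | nil => simp at hj
  | cons a t ih =>
    rw [List.pairwise_cons] at hl
    by_cases ha : p a
    · cases j with
      | zero => simp [ha]
      | succ j => simp [ha, ← ih hl.2 (by simpa using hj)]
    · have hnone : t.countP (p ·) = 0 :=
        List.countP_eq_zero.2 fun x hx hpx => ha (hp (hl.1 x hx) (by simpa using hpx))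
      have hle : a ≤ (a :: t)[j] := by
        cases j with
        | zero => exact le_rfl
        | succ j => exact hl.1 _ (List.getElem_mem _)
      simpa [ha, hnone] using fun h => ha (hp hle h)

theorem countP_sort_ofFn {n : ℕ} (v : Fin n → ℝ) (p : ℝ → Prop) [DecidablePred p] :
    ((List.ofFn v : Multiset ℝ).sort (· ≤ ·)).countP (p ·) = #{i | p (v i)} := by
  rw [← Multiset.coe_countP, Multiset.sort_eq, ← Fin.univ_val_map, Multiset.countP_map]
  rfl

theorem le_card_filter_iff_kth {n k : ℕ} (v : Fin n → ℝ) (hk : 1 ≤ k) (hkn : k ≤ n)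
    {p : ℝ → Prop} [DecidablePred p] (hp : IsLowerSet {x | p x}) :
    k ≤ #{i | p (v i)} ↔ p (kth v k) := by
  have hj : k - 1 < ((List.ofFn v : Multiset ℝ).sort (· ≤ ·)).length := by
    simp only [Multiset.length_sort, Multiset.coe_card, List.length_ofFn]
    omega
  rw [kth, List.getD_eq_getElem _ _ hj,
    ← (Multiset.pairwise_sort _ _).lt_countP_iff_of_isLowerSet hp hj, countP_sort_ofFn]
  omega

theorem card_filter_fin_le {n : ℕ} (p : Fin n → Prop) [DecidablePred p] : #{i | p i} ≤ n :=
  (card_le_univ _).trans_eq (Fintype.card_fin n)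

theorem kth_le_of_le_card {n k : ℕ} (v : Fin n → ℝ) (m : ℝ) (hk : 1 ≤ k)
    (h : k ≤ #{i | v i ≤ m}) : kth v k ≤ m :=
  (le_card_filter_iff_kth v hk (h.trans (card_filter_fin_le _)) (isLowerSet_Iic m)).1 h

theorem le_kth_of_card_le {n k : ℕ} (v : Fin n → ℝ) (m : ℝ) (hkn : k ≤ n)
    (h : n + 1 - k ≤ #{i | m ≤ v i}) : m ≤ kth v k := by
  have hk : 1 ≤ k := by have := card_filter_fin_le fun i => m ≤ v i; omega
  by_contra! hlt
  have hbelow : k ≤ #{i | v i < m} :=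
    (le_card_filter_iff_kth v hk hkn (isLowerSet_Iio m)).2 hlt
  have hsplit := card_filter_add_card_filter_not (s := univ) fun i => v i < m
  simp only [not_lt, card_univ, Fintype.card_fin] at hsplit
  omega

theorem floor_mul_succ_le_ceil_half {α : ℝ} (hα : α ≤ 1 / 2) (n : ℕ) :
    ⌊α * (n + 1)⌋₊ ≤ ⌈(n : ℝ) / 2⌉₊ := by
  refine Nat.lt_add_one_iff.1 ((Nat.floor_lt' (Nat.succ_ne_zero _)).2 ?_)
  have hhalf := Nat.le_ceil ((n : ℝ) / 2)
  push_cast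
  nlinarith

theorem lt_ceil_one_sub_mul_succ_add_ceil_half {α : ℝ} (hα : α ≤ 1 / 2) (n : ℕ) :
    n < ⌈(1 - α) * (n + 1)⌉₊ + ⌈(n : ℝ) / 2⌉₊ := by
  have hupper := Nat.le_ceil ((1 - α) * (n + 1))
  have hhalf := Nat.le_ceil ((n : ℝ) / 2)
  have hreal : (n : ℝ) < ⌈(1 - α) * (n + 1)⌉₊ + ⌈(n : ℝ) / 2⌉₊ := by nlinarith
  exact_mod_cast hreal

theorem median_mem_jackknife_plus_general (n : ℕ) (α : ℝ) (hα : α ≤ 1 / 2)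
    (μ : Fin n → ℝ) (R : Fin n → ℝ) (hR : ∀ i, 0 ≤ R i) (m : ℝ)
    (hml : (⌈(n : ℝ) / 2⌉₊ : ℝ) ≤ (Finset.univ.filter fun i => μ i ≤ m).card)
    (hmr : (⌈(n : ℝ) / 2⌉₊ : ℝ) ≤ (Finset.univ.filter fun i => m ≤ μ i).card) :
    qminusE α (fun i => μ i - R i) ≤ (m : EReal) ∧
      (m : EReal) ≤ qplusE α (fun i => μ i + R i) := by
  have hbelow : ⌈(n : ℝ) / 2⌉₊ ≤ #{i | μ i - R i ≤ m} :=
    (Nat.cast_le.1 hml).trans <| card_le_card <| monotone_filter_right _ fun i _ h => by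
      linarith [hR i]
  have habove : ⌈(n : ℝ) / 2⌉₊ ≤ #{i | m ≤ μ i + R i} :=
    (Nat.cast_le.1 hmr).trans <| card_le_card <| monotone_filter_right _ fun i _ h => by
      linarith [hR i]
  constructor
  · unfold qminusE
    split_ifs with hk
    · exact EReal.coe_le_coe_iff.2 <|
        kth_le_of_le_card _ m hk ((floor_mul_succ_le_ceil_half hα n).trans hbelow)
    · exact bot_le
  · unfold qplusE
    split_ifs with hk
    · have hrank := lt_ceil_one_sub_mul_succ_add_ceil_half hα n
      exact EReal.coe_le_coe_iff.2 <| le_kth_of_card_le _ m hk (by omega)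
    · exact le_top

/-- for `α ≤ 1/2`, any median `m` of `μ_1,…,μ_n` (a value with
at least `⌈n/2⌉` of the `μ_i` on each side) lies in the jackknife+ interval
`[q⁻{μ_i - R_i}, q⁺{μ_i + R_i}]` for any nonnegative `R_i`. -/
theorem median_mem_jackknife_plus (n : ℕ) (hn : 1 ≤ n) (α : ℝ)
    (hα0 : 0 ≤ α) (hα : α ≤ 1 / 2)
    (μ : Fin n → ℝ) (R : Fin n → ℝ) (hR : ∀ i, 0 ≤ R i) (m : ℝ)
    (hml : (⌈(n : ℝ) / 2⌉₊ : ℝ) ≤ (Finset.univ.filter fun i => μ i ≤ m).card)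
    (hmr : (⌈(n : ℝ) / 2⌉₊ : ℝ) ≤ (Finset.univ.filter fun i => m ≤ μ i).card) :
    qminusE α (fun i => μ i - R i) ≤ (m : EReal) ∧
      (m : EReal) ≤ qplusE α (fun i => μ i + R i) :=
  median_mem_jackknife_plus_general n α hα μ R hR m hml hmr
end
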